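/- arXiv:2304.14023 — 4 statements merged into one kernel-verified Lean document; each statement's English description precedes it below -/
import Mathlib

section
/- Let C, D, E be abelian categories and let B : C × D → E be a bifunctor which is right exact in each variable separately. Given right exact sequences W → W' → C₀ → 0 in C and X → X' → D₀ → 0 in D (with maps f : W → W', c : W' → C₀, g : X → X', d : X' → D₀), the sequence B(W, X') ⊕ B(W', X) → B(W', X') → B(C₀, D₀) → 0 is right exact in E, where the first map is B(f, id) ∘ π₁ + B(id, g) ∘ π₂ and the second map is B(c, d). -/
open CategoryTheory CategoryTheory.Limits

universe v₁ v₂ v₃ u₁ u₂ u₃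

/-- A pair of composable morphisms `f : X ⟶ Y`, `g : Y ⟶ Z` forms a right exact sequence
`X ⟶ Y ⟶ Z ⟶ 0`: the composite is zero, `g` is an epimorphism, and the sequence is
exact at `Y`. -/
def RightExactSeq {C : Type u₁} [Category.{v₁} C] [Abelian C] {X Y Z : C}
    (f : X ⟶ Y) (g : Y ⟶ Z) : Prop :=
  ∃ w : f ≫ g = 0, Epi g ∧ (ShortComplex.mk f g w).Exact

/-- A functor between abelian categories is right exact if it preserves right exact
sequences. -/
def IsRightExactFunctor {C : Type u₁} [Category.{v₁} C] [Abelian C]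
    {D : Type u₂} [Category.{v₂} D] [Abelian D] (F : C ⥤ D) : Prop :=
  ∀ ⦃X Y Z : C⦄ (f : X ⟶ Y) (g : Y ⟶ Z),
    RightExactSeq f g → RightExactSeq (F.map f) (F.map g)

/-- If `B : C × D → E` is a bifunctor which is right exact in each variable, then applying
it to right exact sequences `W → W' → C₀ → 0` and `X → X' → D₀ → 0` yields a right exact
sequence `B(W,X') ⊕ B(W',X) → B(W',X') → B(C₀,D₀) → 0`. -/
theorem stmt2 {C : Type u₁} [Category.{v₁} C] [Abelian C]
    {D : Type u₂} [Category.{v₂} D] [Abelian D]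
    {E : Type u₃} [Category.{v₃} E] [Abelian E]
    (B : C ⥤ D ⥤ E)
    (hB₁ : ∀ X : C, IsRightExactFunctor (B.obj X))
    (hB₂ : ∀ Y : D, IsRightExactFunctor (B.flip.obj Y))
    {W W' C₀ : C} {X X' D₀ : D}
    (f : W ⟶ W') (c : W' ⟶ C₀) (g : X ⟶ X') (d : X' ⟶ D₀)
    (h₁ : RightExactSeq f c) (h₂ : RightExactSeq g d) :
    RightExactSeq
      (biprod.desc ((B.map f).app X') ((B.obj W').map g))
      ((B.map c).app X' ≫ (B.obj C₀).map d) := by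
  obtain ⟨w₁, e₁, ex₁⟩ := hB₂ X' f c h₁
  obtain ⟨w₂, e₂, ex₂⟩ := hB₁ C₀ g d h₂
  obtain ⟨w₃, e₃, ex₃⟩ := hB₂ X f c h₁
  simp only [Functor.flip_obj_map] at w₁ e₁ ex₁ w₃ e₃ ex₃
  haveI : Epi ((B.map c).app X') := e₁
  haveI : Epi ((B.obj C₀).map d) := e₂
  haveI : Epi ((B.map c).app X) := e₃
  have hnat : (B.obj W').map g ≫ (B.map c).app X' = (B.map c).app X ≫ (B.obj C₀).map g :=
    (B.map c).naturality g
  have w : biprod.desc ((B.map f).app X') ((B.obj W').map g) ≫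
      ((B.map c).app X' ≫ (B.obj C₀).map d) = 0 := by
    apply biprod.hom_ext'
    · simp [reassoc_of% w₁]
    · rw [biprod.inr_desc_assoc, reassoc_of% hnat, w₂, comp_zero, comp_zero]
  refine ⟨w, epi_comp _ _, ?_⟩
  apply ShortComplex.exact_of_g_is_cokernel
  refine CokernelCofork.IsColimit.ofπ _ _ (fun {T} k hk => ?_) ?_ ?_
  · -- desc
    have hk₁ : (B.map f).app X' ≫ k = 0 := by
      have := biprod.inl ≫= hk
      simpa using this
    refine ex₂.desc (ex₁.desc k hk₁) ?_
    have hk₂ : (B.obj W').map g ≫ k = 0 := by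
      have := biprod.inr ≫= hk
      simpa using this
    rw [← cancel_epi ((B.map c).app X), comp_zero, ← Category.assoc, ← hnat,
      Category.assoc]
    show (B.obj W').map g ≫ (ShortComplex.mk _ _ w₁).g ≫ ex₁.desc k hk₁ = 0
    rw [ex₁.g_desc, hk₂]
  · -- fac
    intro T k hk
    dsimp only
    rw [Category.assoc]
    show _ ≫ (ShortComplex.mk _ _ w₂).g ≫ ex₂.desc _ _ = k
    rw [ex₂.g_desc]
    show (ShortComplex.mk _ _ w₁).g ≫ ex₁.desc _ _ = k
    rw [ex₁.g_desc]
  · -- uniq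
    intro T k hk m hm
    haveI : Epi ((B.map c).app X' ≫ (B.obj C₀).map d) := epi_comp _ _
    rw [← cancel_epi ((B.map c).app X' ≫ (B.obj C₀).map d)]
    dsimp only
    refine hm.trans ?_
    symm
    rw [Category.assoc]
    show _ ≫ (ShortComplex.mk _ _ w₂).g ≫ ex₂.desc _ _ = k
    rw [ex₂.g_desc]
    show (ShortComplex.mk _ _ w₁).g ≫ ex₁.desc _ _ = k
    rw [ex₁.g_desc]
end

section
/- Let D and C be C-linear abelian categories such that D has enough projectives, let D~ ⊆ D be an additive full subcategory containing all projective objects of D, and let G : D~ → C be a C-linear functor such that for every object X of D~ there is a right exact sequence Q_X → P_X → X → 0 with Q_X, P_X projective in D, for which (G(X), G(p_X)) is a cokernel of G(q_X) in C. Then there exists a right exact C-linear functor F : D → C with F restricted to D~ naturally isomorphic to G, and F is unique up to natural isomorphism among right exact C-linear functors with this property. -/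
open CategoryTheory CategoryTheory.Limits

universe v₁ v₂ u₁ u₂

/-- A functor is additive (as a property). -/
def IsAdditiveFunctor {C : Type u₁} [Category.{v₁} C] [Preadditive C]
    {D : Type u₂} [Category.{v₂} D] [Preadditive D] (F : C ⥤ D) : Prop :=
  ∀ ⦃X Y : C⦄ (f g : X ⟶ Y), F.map (f + g) = F.map f + F.map g

/-- A functor is `ℂ`-linear (as a property). -/
def IsCLinearFunctor {C : Type u₁} [Category.{v₁} C] [Preadditive C] [Linear ℂ C]
    {D : Type u₂} [Category.{v₂} D] [Preadditive D] [Linear ℂ D] (F : C ⥤ D) : Prop :=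
  ∀ ⦃X Y : C⦄ (c : ℂ) (f : X ⟶ Y), F.map (c • f) = c • F.map f

/-!
Only the values of `G` on projective objects matter. Choosing for every `Y` the presentation
`P₁ ⟶ P₀ ⟶ Y ⟶ 0` with `P₀ = Projective.over Y` and `P₁` its syzygies, right exactness forces
`F Y = coker (G P₁ ⟶ G P₀)`. For projective `A` and any `g : A ⟶ Y`, applying `G` to a lift of
`g` through `P₀ ⟶ Y` and composing with the cokernel map gives `toObj g : G A ⟶ F Y`; it does not
depend on the lift, since two lifts differ by a map through `P₁`. Everything is computed on these
generators: they are additive and natural in `g`, and a map out of `F Y` killing `F q` for an exact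
`q, p` kills `toObj g` whenever `g ≫ p = 0`, because such a `g` factors through `q`. On `D~` the
assumed cokernel presentations identify `F X` with `G X`, and any right exact `F'` agreeing with `G`
sends the chosen presentations to cokernels as well, hence is isomorphic to `F`.
-/

section FunctorProperties

variable {C : Type u₁} [Category.{v₁} C] [Preadditive C] {D : Type u₂} [Category.{v₂} D]
  [Preadditive D] {F : C ⥤ D}

lemma isAdditiveFunctor_iff : IsAdditiveFunctor F ↔ F.Additive :=
  ⟨fun h => ⟨fun {_ _} f g => h f g⟩, fun _ _ _ _ _ => F.map_add⟩

lemma isCLinearFunctor_iff [Linear ℂ C] [Linear ℂ D] [F.Additive] :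
    IsCLinearFunctor F ↔ F.Linear ℂ :=
  ⟨fun h => ⟨fun {_ _} f c => h c f⟩, fun _ _ _ c f => F.map_smul c f⟩

end FunctorProperties

noncomputable section

namespace RightExactExtension

variable {D : Type u₁} [Category.{v₁} D] {C : Type u₂} [Category.{v₂} C]

abbrev Projectives (D : Type u₁) [Category.{v₁} D] :=
  ObjectProperty.FullSubcategory (fun X : D => Projective X)

section mapP

variable (H : Projectives D ⥤ C)

abbrev mapP {A B : D} [Projective A] [Projective B] (f : A ⟶ B) :
    H.obj ⟨A, ‹_›⟩ ⟶ H.obj ⟨B, ‹_›⟩ :=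
  H.map (ObjectProperty.homMk f)

variable {H} {A B E : D} [Projective A] [Projective B] [Projective E]

lemma mapP_comp (f : A ⟶ B) (g : B ⟶ E) : mapP H (f ≫ g) = mapP H f ≫ mapP H g :=
  H.map_comp (X := ⟨A, _⟩) (Y := ⟨B, _⟩) (Z := ⟨E, _⟩) (ObjectProperty.homMk f)
    (ObjectProperty.homMk g)

lemma mapP_comp_assoc {T : C} (f : A ⟶ B) (g : B ⟶ E) (h : H.obj ⟨E, ‹_›⟩ ⟶ T) :
    mapP H (f ≫ g) ≫ h = mapP H f ≫ mapP H g ≫ h := by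
  rw [mapP_comp, Category.assoc]

lemma mapP_id : mapP H (𝟙 A) = 𝟙 _ := H.map_id _

lemma mapP_comp_app {F : D ⥤ C} (α : H ⟶ ObjectProperty.ι _ ⋙ F) (f : A ⟶ B) :
    mapP H f ≫ α.app ⟨B, ‹Projective B›⟩ = α.app ⟨A, ‹Projective A›⟩ ≫ F.map f :=
  α.naturality (X := ⟨A, _⟩) (Y := ⟨B, _⟩) (ObjectProperty.homMk f)

lemma map_comp_app {F : D ⥤ C} (β : ObjectProperty.ι _ ⋙ F ⟶ H) (f : A ⟶ B) :
    F.map f ≫ β.app ⟨B, ‹Projective B›⟩ = β.app ⟨A, ‹Projective A›⟩ ≫ mapP H f :=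
  β.naturality (X := ⟨A, _⟩) (Y := ⟨B, _⟩) (ObjectProperty.homMk f)

variable [Preadditive D] [Preadditive C]

lemma mapP_smul {R : Type*} [Semiring R] [Linear R D] [Linear R C] [H.Linear R]
    (c : R) (f : A ⟶ B) : mapP H (c • f) = c • mapP H f :=
  H.map_smul (X := ⟨A, _⟩) (Y := ⟨B, _⟩) c (ObjectProperty.homMk f)

variable [H.Additive]

lemma mapP_sub (f g : A ⟶ B) : mapP H (f - g) = mapP H f - mapP H g := H.map_sub

end mapP

section Restriction

variable {S : ObjectProperty D} (hproj : ∀ X : D, Projective X → S X) (G : S.FullSubcategory ⥤ C)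

instance [Preadditive D] : (ObjectProperty.ιOfLE hproj).Additive where

instance {R : Type*} [Semiring R] [Preadditive D] [Linear R D] :
    (ObjectProperty.ιOfLE hproj).Linear R where

abbrev restriction : Projectives D ⥤ C := ObjectProperty.ιOfLE hproj ⋙ G

variable {A B : D} [Projective A] [Projective B] {X : S.FullSubcategory}

abbrev mapS (g : A ⟶ X.obj) : G.obj ⟨A, hproj A ‹_›⟩ ⟶ G.obj X := G.map (ObjectProperty.homMk g)

lemma mapP_comp_mapS (f : A ⟶ B) (g : B ⟶ X.obj) :
    mapP (restriction hproj G) f ≫ mapS hproj G g = mapS hproj G (f ≫ g) :=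
  (G.map_comp (X := ⟨A, _⟩) (Y := ⟨B, _⟩) (ObjectProperty.homMk f) (ObjectProperty.homMk g)).symm

end Restriction

variable [Abelian D] [EnoughProjectives D] [Abelian C] (H : Projectives D ⥤ C)

abbrev d (Y : D) : Projective.syzygies (Projective.π Y) ⟶ Projective.over Y :=
  Projective.d (Projective.π Y)

lemma d_comp_π (Y : D) : d Y ≫ Projective.π Y = 0 :=
  (Category.assoc _ _ _).trans (by rw [kernel.condition]; exact comp_zero)

lemma exact_d (Y : D) : (ShortComplex.mk (d Y) (Projective.π Y) (d_comp_π Y)).Exact :=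
  exact_d_f _

abbrev obj (Y : D) : C := cokernel (mapP H (d Y))

variable {H}

def toObj {A Y : D} [Projective A] (g : A ⟶ Y) : H.obj ⟨A, ‹_›⟩ ⟶ obj H Y :=
  mapP H (Projective.factorThru g (Projective.π Y)) ≫ cokernel.π _

variable {A B Y : D} [Projective A] [Projective B]

section DescApp

variable {F : D ⥤ C} [F.PreservesZeroMorphisms]

def descApp (α : H ⟶ ObjectProperty.ι _ ⋙ F) (Y : D) : obj H Y ⟶ F.obj Y :=
  cokernel.desc _ (α.app _ ≫ F.map (Projective.π Y)) (by
    rw [← Category.assoc, mapP_comp_app, Category.assoc, ← F.map_comp, d_comp_π, F.map_zero,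
      comp_zero])

lemma toObj_comp_descApp (α : H ⟶ ObjectProperty.ι _ ⋙ F) (g : A ⟶ Y) :
    toObj g ≫ descApp α Y = α.app ⟨A, ‹Projective A›⟩ ≫ F.map g := by
  rw [toObj, Category.assoc, descApp, cokernel.π_desc, ← Category.assoc,
    mapP_comp_app α (Projective.factorThru g _), Category.assoc,
    ← F.map_comp (Projective.factorThru g _), Projective.factorThru_comp]

end DescApp

variable [H.Additive]

lemma mapP_comp_cokernelπ (g : A ⟶ Projective.over Y) :
    mapP H g ≫ cokernel.π _ = toObj (H := H) (g ≫ Projective.π Y) := by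
  set g' := Projective.factorThru (g ≫ Projective.π Y) (Projective.π Y)
  have hdiff : (g - g') ≫ Projective.π Y = 0 := by
    rw [Preadditive.sub_comp, Projective.factorThru_comp, sub_self]
  obtain ⟨h, hh⟩ : ∃ h, h ≫ d Y = g - g' :=
    ⟨(exact_d Y).liftFromProjective _ hdiff, (exact_d Y).liftFromProjective_comp _ hdiff⟩
  rw [toObj, ← sub_eq_zero, ← Preadditive.sub_comp, ← mapP_sub, ← hh, mapP_comp_assoc,
    cokernel.condition, comp_zero]

lemma toObj_π : toObj (H := H) (Projective.π Y) = cokernel.π _ := by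
  have := mapP_comp_cokernelπ (H := H) (𝟙 (Projective.over Y))
  rw [mapP_id, Category.id_comp, Category.id_comp] at this
  exact this.symm

lemma mapP_comp_toObj (a : A ⟶ B) (g : B ⟶ Y) :
    mapP H a ≫ toObj g = toObj (H := H) (a ≫ g) := by
  rw [toObj, ← mapP_comp_assoc, mapP_comp_cokernelπ, Category.assoc,
    Projective.factorThru_comp]

lemma toObj_sub (g g' : A ⟶ Y) : toObj (H := H) (g - g') = toObj g - toObj g' := by
  have := mapP_comp_cokernelπ (H := H)
    (Projective.factorThru g (Projective.π Y) - Projective.factorThru g' (Projective.π Y))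
  rw [mapP_sub, Preadditive.sub_comp, Preadditive.sub_comp, Projective.factorThru_comp,
    Projective.factorThru_comp] at this
  exact this.symm

lemma toObj_add (g g' : A ⟶ Y) : toObj (H := H) (g + g') = toObj g + toObj g' := by
  rw [← sub_eq_iff_eq_add, ← toObj_sub, add_sub_cancel_right]

lemma toObj_zero : toObj (H := H) (0 : A ⟶ Y) = 0 := by
  rw [← sub_self (0 : A ⟶ Y), toObj_sub, sub_self]

lemma toObj_smul {R : Type*} [Semiring R] [Linear R D] [Linear R C] [H.Linear R]
    (c : R) (g : A ⟶ Y) : toObj (H := H) (c • g) = c • toObj g := by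
  have := mapP_comp_cokernelπ (H := H) (c • Projective.factorThru g (Projective.π Y))
  rw [mapP_smul, Linear.smul_comp, Linear.smul_comp, Projective.factorThru_comp] at this
  exact this.symm

lemma obj_hom_ext {T : C} {f f' : obj H Y ⟶ T}
    (h : toObj (Projective.π Y) ≫ f = toObj (Projective.π Y) ≫ f') : f = f' := by
  rwa [toObj_π, cancel_epi] at h

variable (H) in
def map {X Y : D} (f : X ⟶ Y) : obj H X ⟶ obj H Y :=
  cokernel.desc _ (toObj (Projective.π X ≫ f)) (by
    rw [mapP_comp_toObj, ← Category.assoc, d_comp_π, zero_comp, toObj_zero])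

lemma toObj_comp_map {X : D} (g : A ⟶ X) (f : X ⟶ Y) :
    toObj g ≫ map H f = toObj (H := H) (g ≫ f) := by
  rw [toObj, Category.assoc, map, cokernel.π_desc, mapP_comp_toObj, ← Category.assoc,
    Projective.factorThru_comp]

lemma map_id (X : D) : map H (𝟙 X) = 𝟙 _ :=
  obj_hom_ext (by rw [toObj_comp_map, Category.comp_id, Category.comp_id])

lemma map_comp {X Z : D} (f : X ⟶ Y) (g : Y ⟶ Z) : map H (f ≫ g) = map H f ≫ map H g :=
  obj_hom_ext (by
    rw [toObj_comp_map, ← Category.assoc (toObj _), toObj_comp_map, toObj_comp_map,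
      Category.assoc])

lemma map_add {X : D} (f g : X ⟶ Y) : map H (f + g) = map H f + map H g :=
  obj_hom_ext (by
    rw [Preadditive.comp_add, toObj_comp_map, toObj_comp_map, toObj_comp_map,
      Preadditive.comp_add, toObj_add])

lemma map_smul {R : Type*} [Semiring R] [Linear R D] [Linear R C] [H.Linear R] {X : D}
    (c : R) (f : X ⟶ Y) : map H (c • f) = c • map H f :=
  obj_hom_ext (by
    rw [Linear.comp_smul, toObj_comp_map, toObj_comp_map, Linear.comp_smul, toObj_smul])

variable (H) in
def extension : D ⥤ C where
  obj := obj H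
  map := map H
  map_id := map_id
  map_comp := map_comp

instance : (extension H).Additive where
  map_add := map_add _ _

instance {R : Type*} [Semiring R] [Linear R D] [Linear R C] [H.Linear R] :
    (extension H).Linear R where
  map_smul _ _ := map_smul _ _

lemma map_zero {X : D} : map H (0 : X ⟶ Y) = 0 := (extension H).map_zero X Y

section RightExact

variable {X Z : D} {q : X ⟶ Y} {p : Y ⟶ Z} {w : q ≫ p = 0}
  (hqp : (ShortComplex.mk q p w).Exact) {T : C} {t : obj H Y ⟶ T} (ht : map H q ≫ t = 0)
include hqp ht

lemma toObj_comp_eq_zero_of_comp_eq_zero (g : A ⟶ Y) (hg : g ≫ p = 0) : toObj g ≫ t = 0 := by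
  rw [← hqp.liftFromProjective_comp g hg, ← toObj_comp_map, Category.assoc, ht, comp_zero]

lemma toObj_comp_eq_of_comp_eq (g g' : A ⟶ Y) (h : g ≫ p = g' ≫ p) :
    toObj g ≫ t = toObj g' ≫ t := by
  rw [← sub_eq_zero, ← Preadditive.sub_comp, ← toObj_sub]
  exact toObj_comp_eq_zero_of_comp_eq_zero hqp ht _ (by rw [Preadditive.sub_comp, h, sub_self])

variable [Epi p]

def descOfExact : obj H Z ⟶ T :=
  cokernel.desc _ (toObj (Projective.factorThru (Projective.π Z) p) ≫ t) (by
    rw [← Category.assoc, mapP_comp_toObj]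
    exact toObj_comp_eq_zero_of_comp_eq_zero hqp ht _
      (by rw [Category.assoc, Projective.factorThru_comp, d_comp_π]))

lemma toObj_comp_descOfExact (g : A ⟶ Y) :
    toObj (g ≫ p) ≫ descOfExact hqp ht = toObj g ≫ t := by
  rw [toObj, Category.assoc, descOfExact, cokernel.π_desc, ← Category.assoc, mapP_comp_toObj]
  exact toObj_comp_eq_of_comp_eq hqp ht _ _ (by
    rw [Category.assoc, Projective.factorThru_comp, Projective.factorThru_comp])

def isColimitCokernelCofork :
    IsColimit (CokernelCofork.ofπ (map H p) (by rw [← map_comp, w, map_zero])) :=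
  CokernelCofork.IsColimit.ofπ _ _ (fun _ ht => descOfExact hqp ht)
    (fun _ ht => obj_hom_ext (by
      rw [← Category.assoc, toObj_comp_map, toObj_comp_descOfExact]))
    (fun _ ht m hm => obj_hom_ext (by
      have hπ : toObj (H := H) (Projective.π Z)
          = toObj (Projective.factorThru (Projective.π Z) p ≫ p) := by
        rw [Projective.factorThru_comp]
      rw [hπ, toObj_comp_descOfExact, ← toObj_comp_map, Category.assoc, hm]))

end RightExact

theorem isRightExactFunctor_extension : IsRightExactFunctor (extension H) := by
  rintro X Y Z q p ⟨w, hp, hqp⟩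
  have hc := isColimitCokernelCofork (H := H) hqp
  exact ⟨by rw [← Functor.map_comp, w, Functor.map_zero], epi_of_isColimit_cofork hc,
    ShortComplex.exact_of_g_is_cokernel _ hc⟩

section Desc

variable {F : D ⥤ C} [F.PreservesZeroMorphisms]

variable (H) in
def desc (α : H ⟶ ObjectProperty.ι _ ⋙ F) : extension H ⟶ F where
  app := descApp α
  naturality X Y f := obj_hom_ext (by
    change toObj _ ≫ map H f ≫ _ = toObj _ ≫ descApp α X ≫ F.map f
    rw [← Category.assoc, toObj_comp_map, toObj_comp_descApp, ← Category.assoc,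
      toObj_comp_descApp, Category.assoc, F.map_comp])

lemma isIso_descApp (hF : IsRightExactFunctor F) (e : H ≅ ObjectProperty.ι _ ⋙ F) (Y : D) :
    IsIso (descApp e.hom Y) := by
  obtain ⟨w, _, hex⟩ := hF _ _ (show RightExactSeq (d Y) (Projective.π Y) from
    ⟨d_comp_π Y, inferInstance, exact_d Y⟩)
  let hc := hex.gIsCokernel
  let P₀ : Projectives D := ⟨Projective.over Y, inferInstance⟩
  let γ : F.obj Y ⟶ obj H Y := hc.desc (CokernelCofork.ofπ (e.inv.app P₀ ≫ cokernel.π _) (by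
    change F.map (d Y) ≫ _ = 0
    rw [← Category.assoc, map_comp_app, Category.assoc, cokernel.condition, comp_zero]))
  have hγ : F.map (Projective.π Y) ≫ γ = e.inv.app P₀ ≫ cokernel.π _ :=
    Cofork.IsColimit.π_desc hc
  refine ⟨γ, obj_hom_ext ?_, ?_⟩
  · rw [← Category.assoc, toObj_comp_descApp, Category.assoc, hγ, Iso.hom_inv_id_app_assoc,
      toObj_π, Category.comp_id]
  · rw [← cancel_epi (F.map (Projective.π Y)), ← Category.assoc, hγ, Category.assoc, ← toObj_π,
      toObj_comp_descApp, Iso.inv_hom_id_app_assoc, Category.comp_id]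

variable (H) in
def isoOfIsRightExactFunctor (hF : IsRightExactFunctor F) (e : H ≅ ObjectProperty.ι _ ⋙ F) :
    extension H ≅ F :=
  have : ∀ Y, IsIso ((desc H e.hom).app Y) := isIso_descApp hF e
  have : IsIso (desc H e.hom) := NatIso.isIso_of_isIso_app _
  asIso (desc H e.hom)

end Desc

section Comparison

variable {S : ObjectProperty D} (hproj : ∀ X : D, Projective X → S X)
  (G : S.FullSubcategory ⥤ C) [G.Additive] {X : S.FullSubcategory}

def comparisonApp (X : S.FullSubcategory) : obj (restriction hproj G) X.obj ⟶ G.obj X :=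
  cokernel.desc _ (mapS hproj G (Projective.π X.obj)) (by
    rw [mapP_comp_mapS, d_comp_π]
    exact G.map_zero _ _)

lemma toObj_comp_comparisonApp (g : A ⟶ X.obj) :
    toObj g ≫ comparisonApp hproj G X = mapS hproj G g := by
  rw [toObj, Category.assoc, comparisonApp, cokernel.π_desc, mapP_comp_mapS,
    Projective.factorThru_comp]

def comparison : ObjectProperty.ι S ⋙ extension (restriction hproj G) ⟶ G where
  app := comparisonApp hproj G
  naturality X Y f := obj_hom_ext (by
    change toObj _ ≫ map _ f.hom ≫ _ = toObj _ ≫ comparisonApp hproj G X ≫ G.map f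
    rw [← Category.assoc, toObj_comp_map, toObj_comp_comparisonApp, ← Category.assoc,
      toObj_comp_comparisonApp]
    exact G.map_comp (ObjectProperty.homMk _) f)

lemma isIso_comparisonApp (X : S.FullSubcategory) {Q P : D} [Projective Q] [Projective P]
    (q : Q ⟶ P) (p : P ⟶ X.obj) (hqp : q ≫ p = 0) [Epi p]
    {w : mapP (restriction hproj G) q ≫ mapS hproj G p = 0}
    (hc : IsColimit (CokernelCofork.ofπ (mapS hproj G p) w)) :
    IsIso (comparisonApp hproj G X) := by
  let ψ : G.obj X ⟶ obj (restriction hproj G) X.obj :=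
    hc.desc (CokernelCofork.ofπ (toObj (H := restriction hproj G) p) (by
      rw [mapP_comp_toObj, hqp, toObj_zero]))
  have hψ : mapS hproj G p ≫ ψ = toObj (H := restriction hproj G) p :=
    Cofork.IsColimit.π_desc hc
  refine ⟨ψ, obj_hom_ext ?_, Cofork.IsColimit.hom_ext hc ?_⟩
  · have hπ : mapS hproj G (Projective.π X.obj)
        = mapP (restriction hproj G) (Projective.factorThru (Projective.π X.obj) p)
          ≫ mapS hproj G p := by
      rw [mapP_comp_mapS, Projective.factorThru_comp]
    rw [← Category.assoc, toObj_comp_comparisonApp, hπ, Category.assoc, hψ, mapP_comp_toObj,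
      Projective.factorThru_comp, Category.comp_id]
  · change mapS hproj G p ≫ ψ ≫ _ = mapS hproj G p ≫ 𝟙 _
    rw [← Category.assoc, hψ, toObj_comp_comparisonApp, Category.comp_id]

end Comparison

end RightExactExtension

end

theorem stmt8_general {D : Type u₁} [Category.{v₁} D] [Abelian D] [Linear ℂ D]
    {C : Type u₂} [Category.{v₂} C] [Abelian C] [Linear ℂ C]
    [EnoughProjectives D]
    (S : D → Prop)
    (hproj : ∀ X : D, Projective X → S X)
    (G : ObjectProperty.FullSubcategory S ⥤ C)
    (hGadd : IsAdditiveFunctor G) (hGlin : IsCLinearFunctor G)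
    (hG : ∀ X : ObjectProperty.FullSubcategory S, ∃ (Q P : D) (hQ : Projective Q) (hP : Projective P)
      (q : Q ⟶ P) (p : P ⟶ X.obj),
        RightExactSeq q p ∧
        ∃ w : G.map (show (⟨Q, hproj Q hQ⟩ : ObjectProperty.FullSubcategory S) ⟶ ⟨P, hproj P hP⟩ from ObjectProperty.homMk q) ≫
              G.map (show (⟨P, hproj P hP⟩ : ObjectProperty.FullSubcategory S) ⟶ X from ObjectProperty.homMk p) = 0,
          Nonempty (IsColimit (CokernelCofork.ofπ
            (G.map (show (⟨P, hproj P hP⟩ : ObjectProperty.FullSubcategory S) ⟶ X from ObjectProperty.homMk p)) w))) :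
    ∃ F : D ⥤ C, IsAdditiveFunctor F ∧ IsCLinearFunctor F ∧ IsRightExactFunctor F ∧
      Nonempty (ObjectProperty.ι S ⋙ F ≅ G) ∧
      ∀ F' : D ⥤ C, IsAdditiveFunctor F' → IsCLinearFunctor F' → IsRightExactFunctor F' →
        Nonempty (ObjectProperty.ι S ⋙ F' ≅ G) → Nonempty (F' ≅ F) := by
  open RightExactExtension in
  have := isAdditiveFunctor_iff.1 hGadd
  have := isCLinearFunctor_iff.1 hGlin
  refine ⟨extension (restriction hproj G), isAdditiveFunctor_iff.2 inferInstance,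
    isCLinearFunctor_iff.2 inferInstance, isRightExactFunctor_extension, ⟨?_⟩, ?_⟩
  · have : ∀ X, IsIso ((comparison hproj G).app X) := fun X => by
      obtain ⟨Q, P, hQ, hP, q, p, ⟨hqp, hp, -⟩, _, ⟨hc⟩⟩ := hG X
      exact isIso_comparisonApp hproj G X q p hqp hc
    have : IsIso (comparison hproj G) := NatIso.isIso_of_isIso_app _
    exact asIso (comparison hproj G)
  · rintro F' hF'add - hF' ⟨e⟩
    have := isAdditiveFunctor_iff.1 hF'add
    exact ⟨(isoOfIsRightExactFunctor _ hF'
      (Functor.isoWhiskerLeft (ObjectProperty.ιOfLE hproj) e.symm)).symm⟩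

/-- Let `D` and `C` be `ℂ`-linear abelian categories with `D` having enough projectives,
let `S` determine an additive full subcategory `D~ ⊆ D` containing all projective objects
of `D`, and let `G : D~ ⥤ C` be a `ℂ`-linear additive functor such that for every object
`X` of `D~` there is a right exact sequence `Q_X → P_X → X → 0` with `Q_X, P_X` projective
in `D` for which `(G X, G p_X)` is a cokernel of `G q_X` in `C`.  Then there is a right
exact `ℂ`-linear functor `F : D ⥤ C` with `F|_{D~} ≅ G`, and `F` is unique up to natural
isomorphism among right exact `ℂ`-linear functors with this property. -/
theorem stmt8 {D : Type u₁} [Category.{v₁} D] [Abelian D] [Linear ℂ D]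
    {C : Type u₂} [Category.{v₂} C] [Abelian C] [Linear ℂ C]
    [EnoughProjectives D]
    (S : D → Prop)
    (hzero : ∀ X : D, Limits.IsZero X → S X)
    (hsum : ∀ X Y : D, S X → S Y → S (X ⊞ Y))
    (hproj : ∀ X : D, Projective X → S X)
    (G : ObjectProperty.FullSubcategory S ⥤ C)
    (hGadd : IsAdditiveFunctor G) (hGlin : IsCLinearFunctor G)
    (hG : ∀ X : ObjectProperty.FullSubcategory S, ∃ (Q P : D) (hQ : Projective Q) (hP : Projective P)
      (q : Q ⟶ P) (p : P ⟶ X.obj),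
        RightExactSeq q p ∧
        ∃ w : G.map (show (⟨Q, hproj Q hQ⟩ : ObjectProperty.FullSubcategory S) ⟶ ⟨P, hproj P hP⟩ from ObjectProperty.homMk q) ≫
              G.map (show (⟨P, hproj P hP⟩ : ObjectProperty.FullSubcategory S) ⟶ X from ObjectProperty.homMk p) = 0,
          Nonempty (IsColimit (CokernelCofork.ofπ
            (G.map (show (⟨P, hproj P hP⟩ : ObjectProperty.FullSubcategory S) ⟶ X from ObjectProperty.homMk p)) w))) :
    ∃ F : D ⥤ C, IsAdditiveFunctor F ∧ IsCLinearFunctor F ∧ IsRightExactFunctor F ∧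
      Nonempty (ObjectProperty.ι S ⋙ F ≅ G) ∧
      ∀ F' : D ⥤ C, IsAdditiveFunctor F' → IsCLinearFunctor F' → IsRightExactFunctor F' →
        Nonempty (ObjectProperty.ι S ⋙ F' ≅ G) → Nonempty (F' ≅ F) :=
  stmt8_general S hproj G hGadd hGlin hG
end

section
/- Let D and C be abelian categories, D~ ⊆ D an additive full subcategory containing all projective objects of D, where D has enough projectives, and let F, F~ : D → C be right exact functors. Then any natural isomorphism β : F~|_{D~} → F|_{D~} extends to a unique natural isomorphism α : F~ → F with α|_{D~} = β. -/
open CategoryTheory CategoryTheory.Limits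

universe v₁ v₂ u₁ u₂

/-!
Every object `X` has a presentation `Q ⟶ P ⟶ X ⟶ 0` by projectives. A right exact `G` turns it
into a cokernel presentation of `G X`, so a natural transformation `γ` defined on a subcategory
containing the projectives has exactly one possible component at `X`: the map induced by
`γ_P ≫ H.map π`. Naturality follows by lifting morphisms to the projective covers, uniqueness
because `G.map π` is epi, and the extensions of `β` and `β⁻¹` are mutually inverse because their
composites extend identities.
-/

namespace CategoryTheory

variable {D : Type u₁} [Category.{v₁} D] {C : Type u₂} [Category.{v₂} C] {G H : D ⥤ C}

theorem NatTrans.ext_of_projective [EnoughProjectives D] [G.PreservesEpimorphisms]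
    {σ τ : G ⟶ H} (h : ∀ P : D, Projective P → σ.app P = τ.app P) : σ = τ := by
  ext X
  rw [← cancel_epi (G.map (Projective.π X)), σ.naturality, τ.naturality, h _ inferInstance]

theorem NatTrans.ext_of_whiskerLeft_eq [EnoughProjectives D] [G.PreservesEpimorphisms]
    {S : ObjectProperty D} (hS : ∀ X : D, Projective X → S X) {σ τ : G ⟶ H}
    (h : Functor.whiskerLeft S.ι σ = Functor.whiskerLeft S.ι τ) : σ = τ :=
  NatTrans.ext_of_projective fun P hP => congr_app h ⟨P, hS P hP⟩

theorem ObjectProperty.naturality_of_mem {S : ObjectProperty D} (γ : S.ι ⋙ G ⟶ S.ι ⋙ H)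
    {X Y : D} (hX : S X) (hY : S Y) (f : X ⟶ Y) :
    G.map f ≫ γ.app ⟨Y, hY⟩ = γ.app ⟨X, hX⟩ ≫ H.map f :=
  γ.naturality (ObjectProperty.homMk f : (⟨X, hX⟩ : S.FullSubcategory) ⟶ ⟨Y, hY⟩)

end CategoryTheory

open ZeroObject

namespace IsRightExactFunctor

variable {D : Type u₁} [Category.{v₁} D] [Abelian D]
  {C : Type u₂} [Category.{v₂} C] [Abelian C] {G : D ⥤ C}

theorem preservesEpimorphisms (hG : IsRightExactFunctor G) : G.PreservesEpimorphisms where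
  preserves g _ := (hG _ g ⟨kernel.condition g, inferInstance,
    ShortComplex.exact_of_f_is_kernel _ (kernelIsKernel g)⟩).2.1

theorem preservesZeroMorphisms (hG : IsRightExactFunctor G) : G.PreservesZeroMorphisms := by
  have hzero : RightExactSeq (𝟙 (0 : D)) (𝟙 0) :=
    ⟨(isZero_zero D).eq_of_src _ _, inferInstance,
      ShortComplex.exact_of_isZero_X₂ _ (isZero_zero D)⟩
  obtain ⟨hG0, -⟩ := hG _ _ hzero
  rw [← G.map_comp, Category.comp_id, G.map_id] at hG0
  exact Functor.preservesZeroMorphisms_of_map_zero_object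
    ((IsZero.iff_id_eq_zero _).2 hG0).isoZero

end IsRightExactFunctor

section Extension

variable {D : Type u₁} [Category.{v₁} D] [Abelian D] [EnoughProjectives D]
  {C : Type u₂} [Category.{v₂} C] [Abelian C] {G H : D ⥤ C}

open Projective

theorem rightExactSeq_d_π (X : D) : RightExactSeq (d (π X)) (π X) :=
  ⟨_, inferInstance, exact_d_f (π X)⟩

namespace IsRightExactFunctor

variable (hG : IsRightExactFunctor G) [H.PreservesZeroMorphisms] {S : ObjectProperty D}
  (hS : ∀ X : D, Projective X → S X) (γ : S.ι ⋙ G ⟶ S.ι ⋙ H)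

noncomputable def extendApp (X : D) : G.obj X ⟶ H.obj X :=
  have := hG.preservesEpimorphisms
  (hG _ _ (rightExactSeq_d_π X)).2.2.desc
    (γ.app ⟨Projective.over X, hS _ inferInstance⟩ ≫ H.map (π X)) (by
      dsimp only
      rw [← Category.assoc,
        ObjectProperty.naturality_of_mem γ (hS _ inferInstance) (hS _ inferInstance),
        Category.assoc, ← H.map_comp, (rightExactSeq_d_π X).1, H.map_zero, comp_zero])

theorem map_π_comp_extendApp (X : D) :
    G.map (π X) ≫ hG.extendApp hS γ X =
      γ.app ⟨Projective.over X, hS _ inferInstance⟩ ≫ H.map (π X) :=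
  have := hG.preservesEpimorphisms
  (hG _ _ (rightExactSeq_d_π X)).2.2.g_desc _ _

theorem extendApp_naturality {X Y : D} (f : X ⟶ Y) :
    G.map f ≫ hG.extendApp hS γ Y = hG.extendApp hS γ X ≫ H.map f := by
  have := hG.preservesEpimorphisms
  rw [← cancel_epi (G.map (π X))]
  obtain ⟨f', hf'⟩ : ∃ f' : Projective.over X ⟶ Projective.over Y, f' ≫ π Y = π X ≫ f :=
    ⟨factorThru _ _, factorThru_comp _ _⟩
  calc G.map (π X) ≫ G.map f ≫ hG.extendApp hS γ Y
      = G.map f' ≫ G.map (π Y) ≫ hG.extendApp hS γ Y := by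
        simp only [← Category.assoc, ← G.map_comp, hf']
    _ = γ.app ⟨Projective.over X, hS _ inferInstance⟩ ≫ H.map f' ≫ H.map (π Y) := by
        rw [map_π_comp_extendApp, ← Category.assoc, ObjectProperty.naturality_of_mem,
          Category.assoc]
    _ = G.map (π X) ≫ hG.extendApp hS γ X ≫ H.map f := by
        rw [← H.map_comp, hf', H.map_comp, ← Category.assoc, ← map_π_comp_extendApp,
          Category.assoc]

noncomputable def extend : G ⟶ H where
  app := hG.extendApp hS γ
  naturality _ _ f := hG.extendApp_naturality hS γ f

theorem whiskerLeft_extend : Functor.whiskerLeft S.ι (hG.extend hS γ) = γ := by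
  have := hG.preservesEpimorphisms
  ext ⟨X, hX⟩
  dsimp [extend]
  rw [← cancel_epi (G.map (π X)), map_π_comp_extendApp]
  exact (ObjectProperty.naturality_of_mem γ (hS _ inferInstance) hX (π X)).symm

end IsRightExactFunctor

end Extension

theorem stmt9_general {D : Type u₁} [Category.{v₁} D] [Abelian D]
    {C : Type u₂} [Category.{v₂} C] [Abelian C]
    [EnoughProjectives D]
    (S : D → Prop)
    (hproj : ∀ X : D, Projective X → S X)
    (F' F : D ⥤ C)
    (hF' : IsRightExactFunctor F') (hF : IsRightExactFunctor F)
    (β : ObjectProperty.ι S ⋙ F' ≅ ObjectProperty.ι S ⋙ F) :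
    ∃! α : F' ≅ F, ∀ X : ObjectProperty.FullSubcategory S, α.hom.app X.obj = β.hom.app X := by
  have := hF'.preservesEpimorphisms
  have := hF.preservesEpimorphisms
  have := hF'.preservesZeroMorphisms
  have := hF.preservesZeroMorphisms
  refine ⟨⟨hF'.extend hproj β.hom, hF.extend hproj β.inv, ?_, ?_⟩,
    fun X => congr_app (hF'.whiskerLeft_extend hproj β.hom) X,
    fun α hα => Iso.ext (NatTrans.ext_of_whiskerLeft_eq hproj ?_)⟩
  · refine NatTrans.ext_of_whiskerLeft_eq hproj ?_
    rw [Functor.whiskerLeft_comp, hF'.whiskerLeft_extend, hF.whiskerLeft_extend]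
    exact β.hom_inv_id
  · refine NatTrans.ext_of_whiskerLeft_eq hproj ?_
    rw [Functor.whiskerLeft_comp, hF'.whiskerLeft_extend, hF.whiskerLeft_extend]
    exact β.inv_hom_id
  · rw [hF'.whiskerLeft_extend]
    exact NatTrans.ext (funext hα)

/-- Let `D` and `C` be abelian categories with `D` having enough projectives, let
`S` determine an additive full subcategory `D~ ⊆ D` (containing zero objects, closed under
binary direct sums) containing all projective objects of `D`, and let `F, F~ : D ⥤ C` be
right exact functors.  Then any natural isomorphism `β : F~|_{D~} ⟶ F|_{D~}` extends to a
unique natural isomorphism `α : F~ ⟶ F` with `α|_{D~} = β`. -/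
theorem stmt9 {D : Type u₁} [Category.{v₁} D] [Abelian D]
    {C : Type u₂} [Category.{v₂} C] [Abelian C]
    [EnoughProjectives D]
    (S : D → Prop)
    (hzero : ∀ X : D, Limits.IsZero X → S X)
    (hsum : ∀ X Y : D, S X → S Y → S (X ⊞ Y))
    (hproj : ∀ X : D, Projective X → S X)
    (F' F : D ⥤ C)
    (hF' : IsRightExactFunctor F') (hF : IsRightExactFunctor F)
    (β : ObjectProperty.ι S ⋙ F' ≅ ObjectProperty.ι S ⋙ F) :
    ∃! α : F' ≅ F, ∀ X : ObjectProperty.FullSubcategory S, α.hom.app X.obj = β.hom.app X :=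
  stmt9_general S hproj F' F hF' hF β
end

section
/- Let D and C be (not necessarily rigid) monoidal abelian categories whose tensor products are right exact in each variable, let D~ be a monoidal subcategory of D, and let F : D → C be a right exact functor whose restriction to D~ carries the structure of a monoidal functor. Assume that every object X of D admits a right exact sequence Q → P → X → 0 with Q and P objects of D~ which are projective in a suitable abelian full subcategory of D containing X. Then F admits the structure of a monoidal functor on all of D extending the given structure on D~. -/
open CategoryTheory CategoryTheory.Limits MonoidalCategory

universe v₁ v₂ u₁ u₂

/-! Every object `X` is the cokernel of a map `Q ⟶ P` in `D~` with `P` projective, and both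
`F X ⊗ F Y` and `F (X ⊗ Y)` are right exact in each variable. Hence a natural transformation
between two right exact functors that is given on `D~` extends uniquely: on `X` it is induced
on the cokernel, and naturality follows by lifting `P ⟶ X ⟶ X'` through the epimorphism
`P' ⟶ X'` by projectivity of `P`. Extending the tensorator first in the left and then in the
right variable gives `μ'`. Both sides of each coherence axiom are natural in all variables and
agree on `D~`, so they agree everywhere after cancelling the epimorphisms `F P ⟶ F X`. -/

namespace RightExactSeq

variable {C : Type u₁} [Category.{v₁} C] [Abelian C] {X Y Z : C} {f : X ⟶ Y} {g : Y ⟶ Z}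

lemma w (h : RightExactSeq f g) : f ≫ g = 0 := h.choose

lemma epi (h : RightExactSeq f g) : Epi g := h.choose_spec.1

lemma exists_desc (h : RightExactSeq f g) {T : C} {φ : Y ⟶ T} (hφ : f ≫ φ = 0) :
    ∃ ψ : Z ⟶ T, g ≫ ψ = φ := by
  obtain ⟨_, _, hex⟩ := h
  exact hex.desc' φ hφ

end RightExactSeq

lemma rightExactSeq_kernel_ι {C : Type u₁} [Category.{v₁} C] [Abelian C] {X Y : C}
    (g : X ⟶ Y) [Epi g] : RightExactSeq (kernel.ι g) g :=
  ⟨kernel.condition g, inferInstance, ShortComplex.exact_of_f_is_kernel _ (kernelIsKernel g)⟩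

lemma rightExactSeq_zero_id {C : Type u₁} [Category.{v₁} C] [Abelian C] (A B : C) :
    RightExactSeq (0 : A ⟶ B) (𝟙 B) :=
  ⟨zero_comp, inferInstance, (ShortComplex.exact_iff_mono _ rfl).2 inferInstance⟩

namespace IsRightExactFunctor

variable {C : Type u₁} [Category.{v₁} C] [Abelian C] {D : Type u₂} [Category.{v₂} D] [Abelian D]
  {F : C ⥤ D}

lemma preservesZeroMorphisms_s17 (hF : IsRightExactFunctor F) : F.PreservesZeroMorphisms where
  map_zero A B := by simpa using (hF _ _ (rightExactSeq_zero_id A B)).w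

lemma epi_map (hF : IsRightExactFunctor F) {A B : C} (g : A ⟶ B) [Epi g] : Epi (F.map g) :=
  (hF _ _ (rightExactSeq_kernel_ι g)).epi

lemma comp {E : Type*} [Category E] [Abelian E] (hF : IsRightExactFunctor F) {G : D ⥤ E}
    (hG : IsRightExactFunctor G) : IsRightExactFunctor (F ⋙ G) :=
  fun _ _ _ f g h => hG _ _ (hF f g h)

end IsRightExactFunctor

def HasProjectivePresentationsIn {D : Type u₁} [Category.{v₁} D] [Abelian D] (S : D → Prop) :
    Prop :=
  ∀ X : D, ∃ (Q P : D) (q : Q ⟶ P) (p : P ⟶ X), S Q ∧ S P ∧ Projective P ∧ RightExactSeq q p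

lemma HasProjectivePresentationsIn.exists_epi_map {D : Type u₁} [Category.{v₁} D] [Abelian D]
    {E : Type u₂} [Category.{v₂} E] [Abelian E] {S : D → Prop} (hS : HasProjectivePresentationsIn S)
    {G : D ⥤ E} (hG : IsRightExactFunctor G) (X : D) :
    ∃ (P : D) (p : P ⟶ X), S P ∧ Epi (G.map p) := by
  obtain ⟨Q, P, q, p, -, hP, -, hqp⟩ := hS X
  exact ⟨P, p, hP, (hG q p hqp).epi⟩

section Extension

variable {D : Type u₁} [Category.{v₁} D] {E : Type u₂} [Category.{v₂} E] {G H : D ⥤ E}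

lemma natural_family_ext (S : D → Prop) (hcov : ∀ X, ∃ (P : D) (p : P ⟶ X), S P ∧ Epi (G.map p))
    {a b : ∀ X, G.obj X ⟶ H.obj X} (ha : ∀ ⦃X Y⦄ (f : X ⟶ Y), G.map f ≫ a Y = a X ≫ H.map f)
    (hb : ∀ ⦃X Y⦄ (f : X ⟶ Y), G.map f ≫ b Y = b X ≫ H.map f) (h : ∀ X, S X → a X = b X)
    (X : D) : a X = b X := by
  obtain ⟨P, p, hP, _⟩ := hcov X
  rw [← cancel_epi (G.map p), ha, hb, h P hP]

lemma natTrans_ext_of_eqOn (S : D → Prop)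
    (hcov : ∀ X, ∃ (P : D) (p : P ⟶ X), S P ∧ Epi (G.map p)) {α β : G ⟶ H}
    (h : ∀ X, S X → α.app X = β.app X) : α = β :=
  NatTrans.ext (funext (natural_family_ext S hcov α.naturality β.naturality h))

variable [Abelian D] [Abelian E] {S : D → Prop}

lemma exists_natTrans_extending (hS : HasProjectivePresentationsIn S)
    (hG : IsRightExactFunctor G) [H.PreservesZeroMorphisms] (η : ∀ X, S X → (G.obj X ⟶ H.obj X))
    (hη : ∀ ⦃X Y⦄ (hX : S X) (hY : S Y) (f : X ⟶ Y), G.map f ≫ η Y hY = η X hX ≫ H.map f) :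
    ∃ η' : G ⟶ H, ∀ X (hX : S X), η'.app X = η X hX := by
  choose Q P q p hQ hP hproj hqp using hS
  have hdesc : ∀ X, ∃ ψ : G.obj X ⟶ H.obj X, G.map (p X) ≫ ψ = η _ (hP X) ≫ H.map (p X) := by
    intro X
    refine (hG _ _ (hqp X)).exists_desc ?_
    rw [← Category.assoc, hη (hQ X) (hP X), Category.assoc, ← H.map_comp, (hqp X).w,
      H.map_zero, comp_zero]
  choose ψ hψ using hdesc
  have hepi : ∀ X, Epi (G.map (p X)) := fun X => (hG _ _ (hqp X)).epi
  refine ⟨{ app := ψ, naturality := fun X Y f => ?_ }, fun X hX => ?_⟩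
  · have := (hqp Y).epi
    have := hproj X
    obtain ⟨h, hfac⟩ : ∃ h : P X ⟶ P Y, h ≫ p Y = p X ≫ f :=
      ⟨Projective.factorThru _ _, Projective.factorThru_comp _ _⟩
    rw [← cancel_epi (G.map (p X))]
    calc G.map (p X) ≫ G.map f ≫ ψ Y = G.map h ≫ G.map (p Y) ≫ ψ Y := by
          rw [← G.map_comp_assoc, ← hfac, G.map_comp_assoc]
      _ = η _ (hP X) ≫ H.map (h ≫ p Y) := by
          rw [hψ, reassoc_of% hη (hP X) (hP Y) h, H.map_comp]
      _ = G.map (p X) ≫ ψ X ≫ H.map f := by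
          rw [hfac, H.map_comp, reassoc_of% hψ]
  · rw [← cancel_epi (G.map (p X)), hψ, hη (hP X) hX]

lemma exists_natIso_extending (hS : HasProjectivePresentationsIn S)
    (hG : IsRightExactFunctor G) (hH : IsRightExactFunctor H)
    (η : ∀ X, S X → (G.obj X ≅ H.obj X))
    (hη : ∀ ⦃X Y⦄ (hX : S X) (hY : S Y) (f : X ⟶ Y),
      G.map f ≫ (η Y hY).hom = (η X hX).hom ≫ H.map f) :
    ∃ η' : G ≅ H, ∀ X (hX : S X), η'.app X = η X hX := by
  have := hG.preservesZeroMorphisms_s17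
  have := hH.preservesZeroMorphisms_s17
  obtain ⟨a, ha⟩ := exists_natTrans_extending hS hG (fun X hX => (η X hX).hom) hη
  obtain ⟨b, hb⟩ := exists_natTrans_extending hS hH (fun X hX => (η X hX).inv) fun X Y hX hY f => by
    rw [Iso.eq_inv_comp, ← reassoc_of% hη hX hY f, Iso.hom_inv_id, Category.comp_id]
  have hab : a ≫ b = 𝟙 G :=
    natTrans_ext_of_eqOn S (hS.exists_epi_map hG) fun X hX => by simp [ha X hX, hb X hX]
  have hba : b ≫ a = 𝟙 H :=
    natTrans_ext_of_eqOn S (hS.exists_epi_map hH) fun X hX => by simp [ha X hX, hb X hX]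
  exact ⟨⟨a, b, hab, hba⟩, fun X hX => Iso.ext (ha X hX)⟩

end Extension

section Bifunctor

variable {D₁ : Type u₁} [Category.{v₁} D₁] [Abelian D₁] {D₂ : Type*} [Category D₂]
  {E : Type u₂} [Category.{v₂} E] [Abelian E] {G H : D₁ ⥤ D₂ ⥤ E}

lemma exists_bifunctor_iso_extending_left {S₁ : D₁ → Prop} (hS₁ : HasProjectivePresentationsIn S₁)
    {S₂ : D₂ → Prop} (hG : ∀ Y, S₂ Y → IsRightExactFunctor (G.flip.obj Y))
    (hH : ∀ Y, S₂ Y → IsRightExactFunctor (H.flip.obj Y))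
    (η : ∀ X Y, S₁ X → S₂ Y → ((G.obj X).obj Y ≅ (H.obj X).obj Y))
    (hη₁ : ∀ ⦃X X'⦄ (hX : S₁ X) (hX' : S₁ X') (f : X ⟶ X') Y (hY : S₂ Y),
      (G.map f).app Y ≫ (η X' Y hX' hY).hom = (η X Y hX hY).hom ≫ (H.map f).app Y)
    (hη₂ : ∀ X (hX : S₁ X) ⦃Y Y'⦄ (hY : S₂ Y) (hY' : S₂ Y') (g : Y ⟶ Y'),
      (G.obj X).map g ≫ (η X Y' hX hY').hom = (η X Y hX hY).hom ≫ (H.obj X).map g) :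
    ∃ η' : ∀ X Y, S₂ Y → ((G.obj X).obj Y ≅ (H.obj X).obj Y),
      (∀ X Y (hX : S₁ X) (hY : S₂ Y), η' X Y hY = η X Y hX hY) ∧
      (∀ ⦃X X'⦄ (f : X ⟶ X') Y (hY : S₂ Y),
        (G.map f).app Y ≫ (η' X' Y hY).hom = (η' X Y hY).hom ≫ (H.map f).app Y) ∧
      (∀ X ⦃Y Y'⦄ (hY : S₂ Y) (hY' : S₂ Y') (g : Y ⟶ Y'),
        (G.obj X).map g ≫ (η' X Y' hY').hom = (η' X Y hY).hom ≫ (H.obj X).map g) := by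
  have hext : ∀ Y (hY : S₂ Y), ∃ η' : G.flip.obj Y ≅ H.flip.obj Y,
      ∀ X (hX : S₁ X), η'.app X = η X Y hX hY := fun Y hY =>
    exists_natIso_extending hS₁ (hG Y hY) (hH Y hY) (fun X hX => η X Y hX hY)
      fun X X' hX hX' f => hη₁ hX hX' f Y hY
  choose η' hη' using hext
  refine ⟨fun X Y hY => (η' Y hY).app X, fun X Y hX hY => hη' Y hY X hX,
    fun X X' f Y hY => (η' Y hY).hom.naturality f, fun X Y Y' hY hY' g => ?_⟩
  refine natural_family_ext S₁ (hS₁.exists_epi_map (hG Y hY))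
    (a := fun X => (G.obj X).map g ≫ ((η' Y' hY').app X).hom)
    (b := fun X => ((η' Y hY).app X).hom ≫ (H.obj X).map g) (fun X X' f => ?_) (fun X X' f => ?_)
    (fun X hX => ?_) X
  · rw [Iso.app_hom, Iso.app_hom, Category.assoc]
    exact (NatTrans.naturality_assoc (G.map f) g _).symm.trans
      (congrArg _ ((η' Y' hY').hom.naturality f))
  · rw [Iso.app_hom, Iso.app_hom, Category.assoc]
    exact ((η' Y hY).hom.naturality_assoc f _).trans
      (congrArg _ (NatTrans.naturality (H.map f) g).symm)
  · simp only [hη' _ _ X hX]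
    exact hη₂ X hX hY hY' g

end Bifunctor

def IsNaturalTensorator {D : Type u₁} [Category.{v₁} D] [MonoidalCategory D]
    {C : Type u₂} [Category.{v₂} C] [MonoidalCategory C] (F : D ⥤ C)
    (μ : ∀ X Y : D, F.obj X ⊗ F.obj Y ⟶ F.obj (X ⊗ Y)) : Prop :=
  ∀ {X X' Y Y' : D} (f : X ⟶ X') (g : Y ⟶ Y'),
    (F.map f ⊗ₘ F.map g) ≫ μ X' Y' = μ X Y ≫ F.map (f ⊗ₘ g)

section Coherence

variable {D : Type u₁} [Category.{v₁} D] [MonoidalCategory D]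
  {C : Type u₂} [Category.{v₂} C] [MonoidalCategory C] {F : D ⥤ C}
  {μ : ∀ X Y : D, F.obj X ⊗ F.obj Y ⟶ F.obj (X ⊗ Y)}

lemma IsNaturalTensorator.whiskerLeft_naturality
    (hμ : IsNaturalTensorator F μ) (X : D) {Y Y' : D} (g : Y ⟶ Y') :
    (F.obj X ◁ F.map g) ≫ μ X Y' = μ X Y ≫ F.map (X ◁ g) := by
  simpa using hμ (𝟙 X) g

lemma IsNaturalTensorator.whiskerRight_naturality
    (hμ : IsNaturalTensorator F μ) {X X' : D} (f : X ⟶ X') (Y : D) :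
    (F.map f ▷ F.obj Y) ≫ μ X' Y = μ X Y ≫ F.map (f ▷ Y) := by
  simpa using hμ f (𝟙 Y)

lemma IsNaturalTensorator.of_whiskerLeft_of_whiskerRight
    (hl : ∀ X {Y Y' : D} (g : Y ⟶ Y'), (F.obj X ◁ F.map g) ≫ μ X Y' = μ X Y ≫ F.map (X ◁ g))
    (hr : ∀ {X X' : D} (f : X ⟶ X') Y, (F.map f ▷ F.obj Y) ≫ μ X' Y = μ X Y ≫ F.map (f ▷ Y)) :
    IsNaturalTensorator F μ := fun f g => by
  rw [MonoidalCategory.tensorHom_def, MonoidalCategory.tensorHom_def, F.map_comp,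
    Category.assoc, hl, reassoc_of% hr]

lemma IsNaturalTensorator.assoc_lhs_naturality
    (hμ : IsNaturalTensorator F μ) {X X' Y Y' Z Z' : D} (f : X ⟶ X') (g : Y ⟶ Y') (h : Z ⟶ Z') :
    ((F.map f ⊗ₘ F.map g) ⊗ₘ F.map h) ≫ (μ X' Y' ▷ F.obj Z') ≫ μ (X' ⊗ Y') Z' ≫
        F.map (α_ X' Y' Z').hom =
      ((μ X Y ▷ F.obj Z) ≫ μ (X ⊗ Y) Z ≫ F.map (α_ X Y Z).hom) ≫ F.map (f ⊗ₘ g ⊗ₘ h) := by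
  have hXY : ((F.map f ⊗ₘ F.map g) ⊗ₘ F.map h) ≫ (μ X' Y' ▷ F.obj Z') =
      (μ X Y ▷ F.obj Z) ≫ (F.map (f ⊗ₘ g) ⊗ₘ F.map h) := by
    rw [← tensorHom_id, ← tensorHom_id, tensorHom_comp_tensorHom, tensorHom_comp_tensorHom, hμ,
      Category.comp_id, Category.id_comp]
  rw [reassoc_of% hXY, reassoc_of% (hμ (f ⊗ₘ g) h), ← F.map_comp, associator_naturality,
    F.map_comp]
  simp only [Category.assoc]

lemma IsNaturalTensorator.assoc_rhs_naturality
    (hμ : IsNaturalTensorator F μ) {X X' Y Y' Z Z' : D} (f : X ⟶ X') (g : Y ⟶ Y') (h : Z ⟶ Z') :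
    ((F.map f ⊗ₘ F.map g) ⊗ₘ F.map h) ≫ (α_ (F.obj X') (F.obj Y') (F.obj Z')).hom ≫
        (F.obj X' ◁ μ Y' Z') ≫ μ X' (Y' ⊗ Z') =
      ((α_ (F.obj X) (F.obj Y) (F.obj Z)).hom ≫ (F.obj X ◁ μ Y Z) ≫ μ X (Y ⊗ Z)) ≫
        F.map (f ⊗ₘ g ⊗ₘ h) := by
  have hYZ : (F.map f ⊗ₘ F.map g ⊗ₘ F.map h) ≫ (F.obj X' ◁ μ Y' Z') =
      (F.obj X ◁ μ Y Z) ≫ (F.map f ⊗ₘ F.map (g ⊗ₘ h)) := by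
    rw [← id_tensorHom, ← id_tensorHom, tensorHom_comp_tensorHom, tensorHom_comp_tensorHom, hμ,
      Category.comp_id, Category.id_comp]
  rw [associator_naturality_assoc, reassoc_of% hYZ, hμ f (g ⊗ₘ h)]
  simp only [Category.assoc]

variable (S : D → Prop)

lemma IsNaturalTensorator.assoc_of_presentation
    (hμ : IsNaturalTensorator F μ)
    (hcov : ∀ X, ∃ (P : D) (p : P ⟶ X), S P ∧ Epi (F.map p))
    (hepi : ∀ {A A' B B' : C} (f : A ⟶ A') (g : B ⟶ B') [Epi f] [Epi g], Epi (f ⊗ₘ g))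
    (hS : ∀ X Y Z, S X → S Y → S Z →
      (μ X Y ▷ F.obj Z) ≫ μ (X ⊗ Y) Z ≫ F.map (α_ X Y Z).hom =
        (α_ (F.obj X) (F.obj Y) (F.obj Z)).hom ≫ (F.obj X ◁ μ Y Z) ≫ μ X (Y ⊗ Z))
    (X Y Z : D) :
    (μ X Y ▷ F.obj Z) ≫ μ (X ⊗ Y) Z ≫ F.map (α_ X Y Z).hom =
      (α_ (F.obj X) (F.obj Y) (F.obj Z)).hom ≫ (F.obj X ◁ μ Y Z) ≫ μ X (Y ⊗ Z) := by
  obtain ⟨P, p, hP, _⟩ := hcov X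
  obtain ⟨P', p', hP', _⟩ := hcov Y
  obtain ⟨P'', p'', hP'', _⟩ := hcov Z
  have : Epi (F.map p ⊗ₘ F.map p') := hepi _ _
  have : Epi ((F.map p ⊗ₘ F.map p') ⊗ₘ F.map p'') := hepi _ _
  rw [← cancel_epi ((F.map p ⊗ₘ F.map p') ⊗ₘ F.map p''), hμ.assoc_lhs_naturality,
    hS P P' P'' hP hP' hP'', hμ.assoc_rhs_naturality]

lemma IsNaturalTensorator.leftUnitality_of_presentation
    (hμ : IsNaturalTensorator F μ)
    (hcov : ∀ X, ∃ (P : D) (p : P ⟶ X), S P ∧ Epi (F.map p))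
    (hepi : ∀ {A B : C} (f : A ⟶ B) [Epi f], Epi (𝟙_ C ◁ f))
    (e : 𝟙_ C ⟶ F.obj (𝟙_ D))
    (hS : ∀ X, S X → (e ▷ F.obj X) ≫ μ (𝟙_ D) X ≫ F.map (λ_ X).hom = (λ_ (F.obj X)).hom)
    (X : D) : (e ▷ F.obj X) ≫ μ (𝟙_ D) X ≫ F.map (λ_ X).hom = (λ_ (F.obj X)).hom := by
  refine natural_family_ext (G := F ⋙ tensorLeft (𝟙_ C)) (H := F) S
    (fun X => ?_) (fun X Y f => ?_) (fun X Y f => leftUnitor_naturality _) hS X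
  · obtain ⟨P, p, hP, _⟩ := hcov X
    exact ⟨P, p, hP, hepi _⟩
  · dsimp only [Functor.comp_map, curriedTensor_obj_map]
    rw [whisker_exchange_assoc, reassoc_of% hμ.whiskerLeft_naturality (𝟙_ D) f,
      ← F.map_comp, leftUnitor_naturality, F.map_comp]
    simp only [Category.assoc]

lemma IsNaturalTensorator.rightUnitality_of_presentation
    (hμ : IsNaturalTensorator F μ)
    (hcov : ∀ X, ∃ (P : D) (p : P ⟶ X), S P ∧ Epi (F.map p))
    (hepi : ∀ {A B : C} (f : A ⟶ B) [Epi f], Epi (f ▷ 𝟙_ C))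
    (e : 𝟙_ C ⟶ F.obj (𝟙_ D))
    (hS : ∀ X, S X → (F.obj X ◁ e) ≫ μ X (𝟙_ D) ≫ F.map (ρ_ X).hom = (ρ_ (F.obj X)).hom)
    (X : D) : (F.obj X ◁ e) ≫ μ X (𝟙_ D) ≫ F.map (ρ_ X).hom = (ρ_ (F.obj X)).hom := by
  refine natural_family_ext (G := F ⋙ tensorRight (𝟙_ C)) (H := F) S
    (fun X => ?_) (fun X Y f => ?_) (fun X Y f => rightUnitor_naturality _) hS X
  · obtain ⟨P, p, hP, _⟩ := hcov X
    exact ⟨P, p, hP, hepi _⟩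
  · dsimp only [Functor.comp_map, Functor.flip_obj_map, curriedTensor_map_app]
    rw [← whisker_exchange_assoc, reassoc_of% hμ.whiskerRight_naturality f (𝟙_ D),
      ← F.map_comp, rightUnitor_naturality, F.map_comp]
    simp only [Category.assoc]

end Coherence

lemma epi_tensorHom_of_isRightExactFunctor {C : Type u₂} [Category.{v₂} C] [Abelian C]
    [MonoidalCategory C]
    (htC : ∀ X : C, IsRightExactFunctor (tensorLeft X) ∧ IsRightExactFunctor (tensorRight X))
    {A A' B B' : C} (f : A ⟶ A') (g : B ⟶ B') [Epi f] [Epi g] : Epi (f ⊗ₘ g) := by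
  have : Epi (f ▷ B) := (htC B).2.epi_map f
  have : Epi (A' ◁ g) := (htC A').1.epi_map g
  rw [MonoidalCategory.tensorHom_def]
  infer_instance

/-- Let `D`, `C` be (not necessarily rigid) abelian monoidal categories whose tensor
products are right exact in each variable, let `S` cut out a monoidal subcategory
`D~ ⊆ D`, and let `F : D ⥤ C` be a right exact functor whose restriction to `D~` is
equipped with the structure of a monoidal functor (unit isomorphism `ε`, tensorator `μ`
natural and coherent on `D~`).  Assume every object `X` of `D` admits a right exact
sequence `Q → P → X → 0` with `Q`, `P` projective objects belonging to `D~`.  Then the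
monoidal structure extends to all of `F`: there is a tensorator `μ'` defined for all
objects of `D`, agreeing with `μ` on `D~`, natural, and satisfying (together with `ε`)
the associativity and unitality constraints of a monoidal functor. -/
theorem stmt17 {D : Type u₁} [Category.{v₁} D] [Abelian D] [MonoidalCategory D]
    {C : Type u₂} [Category.{v₂} C] [Abelian C] [MonoidalCategory C]
    (htD : ∀ X : D, IsRightExactFunctor (tensorLeft X) ∧ IsRightExactFunctor (tensorRight X))
    (htC : ∀ X : C, IsRightExactFunctor (tensorLeft X) ∧ IsRightExactFunctor (tensorRight X))
    (S : D → Prop) (hS1 : S (𝟙_ D)) (hStensor : ∀ X Y : D, S X → S Y → S (X ⊗ Y))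
    (F : D ⥤ C) (hF : IsRightExactFunctor F)
    (ε : F.obj (𝟙_ D) ≅ 𝟙_ C)
    (μ : ∀ X Y : D, S X → S Y → (F.obj X ⊗ F.obj Y ≅ F.obj (X ⊗ Y)))
    (hμnat : ∀ {X X' Y Y' : D} (hX : S X) (hX' : S X') (hY : S Y) (hY' : S Y')
      (f : X ⟶ X') (g : Y ⟶ Y'),
        (F.map f ⊗ₘ F.map g) ≫ (μ X' Y' hX' hY').hom
          = (μ X Y hX hY).hom ≫ F.map (f ⊗ₘ g))
    (hμassoc : ∀ {X Y Z : D} (hX : S X) (hY : S Y) (hZ : S Z),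
        ((μ X Y hX hY).hom ▷ F.obj Z) ≫ (μ (X ⊗ Y) Z (hStensor X Y hX hY) hZ).hom ≫
            F.map (α_ X Y Z).hom
          = (α_ (F.obj X) (F.obj Y) (F.obj Z)).hom ≫ (F.obj X ◁ (μ Y Z hY hZ).hom) ≫
              (μ X (Y ⊗ Z) hX (hStensor Y Z hY hZ)).hom)
    (hμunitl : ∀ {X : D} (hX : S X),
        (ε.inv ▷ F.obj X) ≫ (μ (𝟙_ D) X hS1 hX).hom ≫ F.map (λ_ X).hom
          = (λ_ (F.obj X)).hom)
    (hμunitr : ∀ {X : D} (hX : S X),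
        (F.obj X ◁ ε.inv) ≫ (μ X (𝟙_ D) hX hS1).hom ≫ F.map (ρ_ X).hom
          = (ρ_ (F.obj X)).hom)
    (hpres : ∀ X : D, ∃ (Q P : D) (_ : S Q) (_ : S P) (_ : Projective Q) (_ : Projective P)
      (q : Q ⟶ P) (p : P ⟶ X), RightExactSeq q p) :
    ∃ μ' : ∀ X Y : D, (F.obj X ⊗ F.obj Y ≅ F.obj (X ⊗ Y)),
      (∀ (X Y : D) (hX : S X) (hY : S Y), μ' X Y = μ X Y hX hY) ∧
      (∀ {X X' Y Y' : D} (f : X ⟶ X') (g : Y ⟶ Y'),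
        (F.map f ⊗ₘ F.map g) ≫ (μ' X' Y').hom = (μ' X Y).hom ≫ F.map (f ⊗ₘ g)) ∧
      (∀ X Y Z : D,
        ((μ' X Y).hom ▷ F.obj Z) ≫ (μ' (X ⊗ Y) Z).hom ≫ F.map (α_ X Y Z).hom
          = (α_ (F.obj X) (F.obj Y) (F.obj Z)).hom ≫ (F.obj X ◁ (μ' Y Z).hom) ≫
              (μ' X (Y ⊗ Z)).hom) ∧
      (∀ X : D, (ε.inv ▷ F.obj X) ≫ (μ' (𝟙_ D) X).hom ≫ F.map (λ_ X).hom
          = (λ_ (F.obj X)).hom) ∧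
      (∀ X : D, (F.obj X ◁ ε.inv) ≫ (μ' X (𝟙_ D)).hom ≫ F.map (ρ_ X).hom
          = (ρ_ (F.obj X)).hom) := by
  have hS : HasProjectivePresentationsIn S := fun X => by
    obtain ⟨Q, P, hQ, hP, -, hPproj, q, p, hqp⟩ := hpres X
    exact ⟨Q, P, q, p, hQ, hP, hPproj, hqp⟩
  obtain ⟨μ₁, hμ₁μ, hμ₁fst, hμ₁snd⟩ := exists_bifunctor_iso_extending_left
    (G := curriedTensorPre F) (H := curriedTensorPost F) hS (S₂ := S)
    (fun Y _ => hF.comp (htC _).2) (fun Y _ => (htD Y).2.comp hF) μ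
    (fun X X' hX hX' f Y hY => by simpa using hμnat hX hX' hY hY f (𝟙 Y))
    (fun X hX Y Y' hY hY' g => by simpa using hμnat hX hX hY hY' (𝟙 X) g)
  obtain ⟨μ₂, hμ₂μ₁, hμ₂snd, hμ₂fst⟩ := exists_bifunctor_iso_extending_left
    (G := (curriedTensorPre F).flip) (H := (curriedTensorPost F).flip) hS
    (S₂ := fun _ => True) (fun X _ => hF.comp (htC _).1) (fun X _ => (htD X).1.comp hF)
    (fun Y X hY _ => μ₁ X Y hY) (fun Y Y' hY hY' g X _ => hμ₁snd X hY hY' g)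
    (fun Y hY X X' _ _ f => hμ₁fst f Y hY)
  have hagree : ∀ X Y (hX : S X) (hY : S Y), μ₂ Y X trivial = μ X Y hX hY :=
    fun X Y hX hY => (hμ₂μ₁ Y X hY trivial).trans (hμ₁μ X Y hX hY)
  have hnat : IsNaturalTensorator F fun X Y => (μ₂ Y X trivial).hom :=
    IsNaturalTensorator.of_whiskerLeft_of_whiskerRight (fun X _ _ g => hμ₂snd g X trivial)
      (fun f Y => hμ₂fst Y trivial trivial f)
  have hcov := hS.exists_epi_map hF
  refine ⟨fun X Y => μ₂ Y X trivial, hagree, hnat,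
    hnat.assoc_of_presentation S hcov (epi_tensorHom_of_isRightExactFunctor htC)
      fun X Y Z hX hY hZ => ?_,
    hnat.leftUnitality_of_presentation S hcov (fun f _ => (htC _).1.epi_map f) ε.inv
      fun X hX => ?_,
    hnat.rightUnitality_of_presentation S hcov (fun f _ => (htC _).2.epi_map f) ε.inv
      fun X hX => ?_⟩
  · dsimp only
    rw [hagree X Y hX hY, hagree _ _ (hStensor X Y hX hY) hZ, hagree Y Z hY hZ,
      hagree _ _ hX (hStensor Y Z hY hZ)]
    exact hμassoc hX hY hZ
  · rw [hagree _ _ hS1 hX]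
    exact hμunitl hX
  · rw [hagree _ _ hX hS1]
    exact hμunitr hX
end
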